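/- arXiv:2404.10377 — 4 statements merged into one kernel-verified Lean document; each statement's English description precedes it below -/
import Mathlib

section
/- Let K be an algebraically closed field of characteristic 0, let p ∈ K[x,y] be irreducible with p ∉ K[x] and p ∉ K[y], and let m > 1 be an integer. If q ∈ K(x,y) is a rational function whose denominator is not divisible by p, f ∈ K(x), g ∈ K(y), and q·p^m = f − g, then q = 0 (equivalently f − g = 0). -/
/-!
Clearing denominators in `q·p^m = f − g` shows that `p^m`, hence `p²`, divides
`W = f_num(x)·g_den(y) − f_den(x)·g_num(y)`, so `p` divides `W` and `∂W/∂x`. Now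
`f_den·∂W/∂x − f_den'·W = g_den(y)·Wr(f_den, f_num)(x)`, and a prime that depends on both
variables divides no nonzero polynomial in one variable, so the Wronskian of `f_den, f_num`
vanishes; as they are coprime, `f` is constant. Likewise `g` is constant, so `W` is a constant
divisible by `p`, i.e. `W = 0`, and then `q = 0`.
-/

open MvPolynomial

noncomputable section

/-- `K[x,y]` as multivariate polynomials in two variables. -/
abbrev P2 (K : Type*) [Field K] := MvPolynomial (Fin 2) K

variable {K : Type*} [Field K]

/-- Embedding of a univariate polynomial as a polynomial in the first variable `x`. -/
def toX (u : Polynomial K) : P2 K := Polynomial.aeval (X 0) u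

/-- Embedding of a univariate polynomial as a polynomial in the second variable `y`. -/
def toY (u : Polynomial K) : P2 K := Polynomial.aeval (X 1) u

/-- The image of `f ∈ K(x)` in `K(x,y)`, the fraction field of `K[x,y]`. -/
def embX (f : RatFunc K) : FractionRing (P2 K) :=
  algebraMap (P2 K) (FractionRing (P2 K)) (toX f.num) /
    algebraMap (P2 K) (FractionRing (P2 K)) (toX f.denom)

/-- The image of `g ∈ K(y)` in `K(x,y)`. -/
def embY (g : RatFunc K) : FractionRing (P2 K) :=
  algebraMap (P2 K) (FractionRing (P2 K)) (toY g.num) /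
    algebraMap (P2 K) (FractionRing (P2 K)) (toY g.denom)

open scoped Polynomial

lemma Polynomial.exists_eq_C_of_dvd_C {R : Type*} [CommRing R] [IsDomain R] {d : R[X]} {r : R}
    (hr : r ≠ 0) (hd : d ∣ Polynomial.C r) : ∃ s, d = Polynomial.C s :=
  ⟨d.coeff 0, Polynomial.eq_C_of_natDegree_eq_zero <| by
    simpa using Polynomial.natDegree_le_of_dvd hd (Polynomial.C_ne_zero.2 hr)⟩

lemma MvPolynomial.C_eq_zero_of_dvd {σ : Type*} {p : MvPolynomial σ K} {c : K} (hp : ¬IsUnit p)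
    (h : p ∣ C c) : (C c : MvPolynomial σ K) = 0 := by
  by_contra hc
  exact hp (isUnit_of_dvd_unit h ((isUnit_iff_ne_zero.2 (by simpa using hc)).map C))

section pderiv

variable {σ R : Type*} [CommRing R]

lemma pderiv_aeval_X_self (i : σ) (u : R[X]) :
    pderiv i (Polynomial.aeval (X i : MvPolynomial σ R) u) =
      Polynomial.aeval (X i) (Polynomial.derivative u) := by
  simp [Derivation.map_aeval]

lemma pderiv_aeval_X_of_ne {i j : σ} (hij : i ≠ j) (u : R[X]) :
    pderiv i (Polynomial.aeval (X j : MvPolynomial σ R) u) = 0 := by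
  simp [Derivation.map_aeval, pderiv_X_of_ne hij.symm]

lemma dvd_pderiv_of_sq_dvd {p q : MvPolynomial σ R} (i : σ) (h : p ^ 2 ∣ q) :
    p ∣ pderiv i q := by
  obtain ⟨r, rfl⟩ := h
  rw [pderiv_mul, pderiv_pow]
  exact ⟨2 * pderiv i p * r + p * pderiv i r, by norm_num; ring⟩

/-- The combination `u₂ ∂ᵢW − u₂' W` eliminates `v₂` from `W = u₁ v₁ − u₂ v₂`. -/
lemma dvd_aeval_mul_aeval_wronskian {i j : σ} (hij : i ≠ j) {p : MvPolynomial σ R}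
    {u₁ u₂ v₁ v₂ : R[X]}
    (h : p ^ 2 ∣ Polynomial.aeval (X i : MvPolynomial σ R) u₁ * Polynomial.aeval (X j) v₁ -
      Polynomial.aeval (X i) u₂ * Polynomial.aeval (X j) v₂) :
    p ∣ Polynomial.aeval (X j : MvPolynomial σ R) v₁ *
      Polynomial.aeval (X i) (Polynomial.wronskian u₂ u₁) := by
  set W := Polynomial.aeval (X i : MvPolynomial σ R) u₁ * Polynomial.aeval (X j) v₁ -
    Polynomial.aeval (X i) u₂ * Polynomial.aeval (X j) v₂ with hW
  have key : Polynomial.aeval (X j : MvPolynomial σ R) v₁ *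
      Polynomial.aeval (X i) (Polynomial.wronskian u₂ u₁) =
      Polynomial.aeval (X i) u₂ * pderiv i W -
        Polynomial.aeval (X i) (Polynomial.derivative u₂) * W := by
    simp only [hW, Polynomial.wronskian, map_sub, map_mul, Derivation.leibniz, smul_eq_mul,
      pderiv_aeval_X_self, pderiv_aeval_X_of_ne hij]
    ring
  rw [key]
  exact dvd_sub ((dvd_pderiv_of_sq_dvd i h).mul_left _)
    (((dvd_pow_self p two_ne_zero).trans h).mul_left _)

lemma wronskian_eq_zero_of_sq_dvd {i j : σ} (hij : i ≠ j) [IsDomain R] {p : MvPolynomial σ R}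
    (hp : Prime p) (hpi : ∀ w : R[X], w ≠ 0 → ¬p ∣ Polynomial.aeval (X i : MvPolynomial σ R) w)
    {u₁ u₂ v₁ v₂ : R[X]} (hpv : ¬p ∣ Polynomial.aeval (X j : MvPolynomial σ R) v₁)
    (h : p ^ 2 ∣ Polynomial.aeval (X i : MvPolynomial σ R) u₁ * Polynomial.aeval (X j) v₁ -
      Polynomial.aeval (X i) u₂ * Polynomial.aeval (X j) v₂) :
    Polynomial.wronskian u₂ u₁ = 0 := by
  by_contra hw
  exact (hp.dvd_or_dvd (dvd_aeval_mul_aeval_wronskian hij h)).elim hpv (hpi _ hw)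

end pderiv

section Bivariate

open Polynomial.Bivariate

/- Under `K[X][Y] ≃ K[x,y]`, `toX u` is the constant `C u`, whose divisors are constants;
`toY u` becomes such a constant after swapping the two variables. -/
lemma equivMvPolynomial_C (u : K[X]) : equivMvPolynomial K (Polynomial.C u) = toX u := by
  induction u using Polynomial.induction_on <;> simp_all [toX]

lemma equivMvPolynomial_map_C (u : K[X]) :
    equivMvPolynomial K (u.map Polynomial.C) = toY u := by
  induction u using Polynomial.induction_on <;> simp_all [toY]

lemma toX_ne_zero {u : K[X]} (hu : u ≠ 0) : toX u ≠ 0 := by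
  simpa [← equivMvPolynomial_C] using hu

lemma toY_ne_zero {u : K[X]} (hu : u ≠ 0) : toY u ≠ 0 := by
  simpa [← equivMvPolynomial_map_C] using hu

lemma not_dvd_toX {p : P2 K} (hpx : ¬∃ v, p = toX v) {u : K[X]} (hu : u ≠ 0) : ¬p ∣ toX u := by
  intro hd
  obtain ⟨v, hv⟩ := Polynomial.exists_eq_C_of_dvd_C hu
    (by simpa [← equivMvPolynomial_C] using map_dvd (equivMvPolynomial K).symm hd)
  exact hpx ⟨v, by rw [← equivMvPolynomial_C, ← hv, AlgEquiv.apply_symm_apply]⟩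

lemma not_dvd_toY {p : P2 K} (hpy : ¬∃ v, p = toY v) {u : K[X]} (hu : u ≠ 0) : ¬p ∣ toY u := by
  intro hd
  obtain ⟨v, hv⟩ := Polynomial.exists_eq_C_of_dvd_C hu
    (by simpa [← equivMvPolynomial_map_C, swap_map_C] using
      map_dvd (swap.toAlgHom.comp (equivMvPolynomial K).symm.toAlgHom) hd)
  exact hpy ⟨v, by
    rw [← equivMvPolynomial_map_C, ← swap_C, ← hv, swap_swap_apply, AlgEquiv.apply_symm_apply]⟩

end Bivariate

lemma toX_eq_C_of_derivative_eq_zero [CharZero K] {u : K[X]} (hu : Polynomial.derivative u = 0) :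
    toX u = C (u.coeff 0) := by
  conv_lhs => rw [Polynomial.eq_C_of_natDegree_eq_zero (Polynomial.derivative_eq_zero.1 hu)]
  simp [toX]

lemma toY_eq_C_of_derivative_eq_zero [CharZero K] {u : K[X]} (hu : Polynomial.derivative u = 0) :
    toY u = C (u.coeff 0) := by
  conv_lhs => rw [Polynomial.eq_C_of_natDegree_eq_zero (Polynomial.derivative_eq_zero.1 hu)]
  simp [toY]

def subNumerator (f g : RatFunc K) : P2 K :=
  toX f.num * toY g.denom - toX f.denom * toY g.num

lemma embX_sub_embY (f g : RatFunc K) :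
    embX f - embY g = algebraMap (P2 K) (FractionRing (P2 K)) (subNumerator f g) /
      algebraMap (P2 K) (FractionRing (P2 K)) (toX f.denom * toY g.denom) := by
  have hinj := IsFractionRing.injective (P2 K) (FractionRing (P2 K))
  rw [embX, embY, div_sub_div _ _ ((map_ne_zero_iff _ hinj).2 (toX_ne_zero f.denom_ne_zero))
    ((map_ne_zero_iff _ hinj).2 (toY_ne_zero g.denom_ne_zero))]
  simp [subNumerator]

lemma mul_mul_denom_eq_mul_subNumerator {a b c : P2 K} (hb : b ≠ 0) {f g : RatFunc K}
    (h : algebraMap (P2 K) (FractionRing (P2 K)) a / algebraMap (P2 K) (FractionRing (P2 K)) b *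
      algebraMap (P2 K) (FractionRing (P2 K)) c = embX f - embY g) :
    a * c * (toX f.denom * toY g.denom) = b * subNumerator f g := by
  have hd := mul_ne_zero (toX_ne_zero f.denom_ne_zero) (toY_ne_zero g.denom_ne_zero)
  have hinj := IsFractionRing.injective (P2 K) (FractionRing (P2 K))
  rw [embX_sub_embY, div_mul_eq_mul_div, ← map_mul,
    div_eq_div_iff ((map_ne_zero_iff _ hinj).2 hb) ((map_ne_zero_iff _ hinj).2 hd),
    ← map_mul, ← map_mul] at h
  rw [hinj h, mul_comm]

theorem statement0_general [CharZero K]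
    (p : P2 K) (hp : Irreducible p)
    (hpx : ¬ ∃ u : Polynomial K, p = toX u)
    (hpy : ¬ ∃ u : Polynomial K, p = toY u)
    (m : ℕ) (hm : 1 < m)
    (a b : P2 K) (hpb : ¬ p ∣ b)
    (f : RatFunc K) (g : RatFunc K)
    (h : (algebraMap (P2 K) (FractionRing (P2 K)) a /
            algebraMap (P2 K) (FractionRing (P2 K)) b) *
          algebraMap (P2 K) (FractionRing (P2 K)) (p ^ m) = embX f - embY g) :
    a = 0 := by
  have hprime : Prime p := hp.prime
  have hE := mul_mul_denom_eq_mul_subNumerator (by rintro rfl; exact hpb (dvd_zero p)) h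
  have hW : p ^ 2 ∣ subNumerator f g := (pow_dvd_pow p hm).trans
    (hprime.pow_dvd_of_dvd_mul_left m hpb ⟨a * (toX f.denom * toY g.denom), by rw [← hE]; ring⟩)
  have hf : Polynomial.wronskian f.denom f.num = 0 :=
    wronskian_eq_zero_of_sq_dvd (i := 0) (j := 1) (by decide) hprime (fun _ => not_dvd_toX hpx)
      (not_dvd_toY hpy g.denom_ne_zero) hW
  have hW' : p ^ 2 ∣ toY g.num * toX f.denom - toY g.denom * toX f.num := by
    rw [← dvd_neg]
    convert hW using 1
    rw [subNumerator]
    ring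
  have hg : Polynomial.wronskian g.denom g.num = 0 :=
    wronskian_eq_zero_of_sq_dvd (i := 1) (j := 0) (by decide) hprime (fun _ => not_dvd_toY hpy)
      (not_dvd_toX hpx f.denom_ne_zero) hW'
  obtain ⟨hfd, hfn⟩ := (RatFunc.isCoprime_num_denom f).symm.wronskian_eq_zero_iff.1 hf
  obtain ⟨hgd, hgn⟩ := (RatFunc.isCoprime_num_denom g).symm.wronskian_eq_zero_iff.1 hg
  have hW0 : subNumerator f g = 0 := by
    rw [subNumerator, toX_eq_C_of_derivative_eq_zero hfn, toX_eq_C_of_derivative_eq_zero hfd,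
      toY_eq_C_of_derivative_eq_zero hgn, toY_eq_C_of_derivative_eq_zero hgd,
      ← map_mul, ← map_mul, ← map_sub] at hW ⊢
    exact C_eq_zero_of_dvd hp.not_isUnit ((dvd_pow_self p two_ne_zero).trans hW)
  simpa [hW0, hprime.ne_zero, toX_ne_zero f.denom_ne_zero, toY_ne_zero g.denom_ne_zero] using hE

/-- If `p` is irreducible, not univariate, `m > 1`, and `q = a/b` (in lowest or any terms,
with `p ∤ b`) satisfies `q·p^m = f − g` with `f ∈ K(x)`, `g ∈ K(y)`, then `q = 0`. -/
theorem statement0 [IsAlgClosed K] [CharZero K]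
    (p : P2 K) (hp : Irreducible p)
    (hpx : ¬ ∃ u : Polynomial K, p = toX u)
    (hpy : ¬ ∃ u : Polynomial K, p = toY u)
    (m : ℕ) (hm : 1 < m)
    (a b : P2 K) (hb : b ≠ 0) (hpb : ¬ p ∣ b)
    (f : RatFunc K) (g : RatFunc K)
    (h : (algebraMap (P2 K) (FractionRing (P2 K)) a /
            algebraMap (P2 K) (FractionRing (P2 K)) b) *
          algebraMap (P2 K) (FractionRing (P2 K)) (p ^ m) = embX f - embY g) :
    a = 0 :=
  statement0_general p hp hpx hpy m hm a b hpb f g h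
end
end

section
/- Let K be an algebraically closed field of characteristic 0 and let p ∈ K[x,y] be irreducible with p ∉ K[x] and p ∉ K[y]. Then the set F(p) = {(f,g) ∈ K(x) × K(y) : the numerator of f − g is divisible by p} is a subfield of the product ring K(x) × K(y) under componentwise addition and multiplication. -/
open MvPolynomial

noncomputable section

variable {K : Type*} [Field K]

/-- The near-separated polynomial `f_n(x)·g_d(y) − g_n(y)·f_d(x)`; `p` divides it
iff `p` divides the numerator of `f − g`. -/
def NS (f g : RatFunc K) : P2 K := toX f.num * toY g.denom - toY g.num * toX f.denom

/-!
Let `L` be the fraction field of the domain `K[x,y]/(p)`. A divisor of a nonzero polynomial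
in `x` alone involves only `x`, so `p` divides none; hence `K[x] → L` is injective and extends
to a field embedding `φ : K(x) → L`, and likewise `ψ : K(y) → L`. Cross-multiplying,
`φ f = ψ g` exactly when `p` divides the numerator of `f - g`, so `F(p)` is the equalizer of
`φ ∘ fst` and `ψ ∘ snd`: a subring, closed under inversion since `φ` and `ψ` commute with it.
-/

namespace MvPolynomial

variable {σ R : Type*} [CommRing R]

theorem exists_polynomialAeval_X_eq_iff_vars_subset {p : MvPolynomial σ R} {i : σ} :
    (∃ u : Polynomial R, Polynomial.aeval (X i) u = p) ↔ p.vars ⊆ {i} := by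
  rw [← AlgHom.mem_range, ← Algebra.adjoin_singleton_eq_range_aeval, ← Set.image_singleton,
    ← supported_eq_adjoin_X, mem_supported, Finset.coe_subset_singleton]

theorem vars_subset_of_dvd [IsDomain R] {p q : MvPolynomial σ R} (h : p ∣ q) (hq : q ≠ 0) :
    p.vars ⊆ q.vars := by
  classical
  obtain ⟨r, rfl⟩ := h
  rw [vars, vars, degrees_mul_eq (left_ne_zero_of_mul hq) (right_ne_zero_of_mul hq),
    Multiset.toFinset_add]
  exact Finset.subset_union_left

theorem exists_eq_polynomialAeval_X_of_dvd [IsDomain R] {p : MvPolynomial σ R} {i : σ}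
    {u : Polynomial R} (hu : u ≠ 0) (h : p ∣ Polynomial.aeval (X i) u) :
    ∃ v : Polynomial R, p = Polynomial.aeval (X i : MvPolynomial σ R) v := by
  have hne : Polynomial.aeval (X i : MvPolynomial σ R) u ≠ 0 := by
    rwa [Ne, ← map_zero (Polynomial.aeval (R := R) (X i : MvPolynomial σ R)),
      (transcendental_iff_injective.mp (transcendental_X R i)).eq_iff]
  obtain ⟨v, hv⟩ := exists_polynomialAeval_X_eq_iff_vars_subset.mpr
    ((vars_subset_of_dvd h hne).trans (exists_polynomialAeval_X_eq_iff_vars_subset.mp ⟨u, rfl⟩))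
  exact ⟨v, hv.symm⟩

theorem injective_comp_polynomialAeval_X [IsDomain R] {S : Type*} [Ring S]
    {p : MvPolynomial σ R} {χ : MvPolynomial σ R →+* S} (hχ : ∀ q, χ q = 0 ↔ p ∣ q) {i : σ}
    (hp : ¬ ∃ u : Polynomial R, p = Polynomial.aeval (X i : MvPolynomial σ R) u) :
    Function.Injective
      (χ.comp (Polynomial.aeval (R := R) (X i : MvPolynomial σ R)).toRingHom) := by
  refine (injective_iff_map_eq_zero _).mpr fun u hu => ?_
  by_contra hu0
  exact hp (exists_eq_polynomialAeval_X_of_dvd hu0 ((hχ _).mp hu))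

end MvPolynomial

theorem liftRingHom_eq_liftRingHom_iff_dvd_NS {L : Type*} [Field L] {p : P2 K} {χ : P2 K →+* L}
    (hχ : ∀ q, χ q = 0 ↔ p ∣ q)
    (hx : Function.Injective (χ.comp (Polynomial.aeval (R := K) (X 0 : P2 K)).toRingHom))
    (hy : Function.Injective (χ.comp (Polynomial.aeval (R := K) (X 1 : P2 K)).toRingHom))
    (f g : RatFunc K) :
    RatFunc.liftRingHom _ (nonZeroDivisors_le_comap_nonZeroDivisors_of_injective _ hx) f =
      RatFunc.liftRingHom _ (nonZeroDivisors_le_comap_nonZeroDivisors_of_injective _ hy) g ↔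
      p ∣ NS f g := by
  rw [RatFunc.liftRingHom_apply, RatFunc.liftRingHom_apply,
    div_eq_div_iff ((map_ne_zero_iff _ hx).mpr f.denom_ne_zero)
      ((map_ne_zero_iff _ hy).mpr g.denom_ne_zero), ← sub_eq_zero, ← hχ]
  simp [NS, toX, toY]

theorem statement1_general
    (p : P2 K) (hp : Irreducible p)
    (hpx : ¬ ∃ u : Polynomial K, p = toX u)
    (hpy : ¬ ∃ u : Polynomial K, p = toY u) :
    ∃ S : Subring (RatFunc K × RatFunc K),
      (S : Set (RatFunc K × RatFunc K)) = {fg | p ∣ NS fg.1 fg.2} ∧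
      ∀ z ∈ S, z ≠ 0 → z⁻¹ ∈ S := by
  have := (Ideal.span_singleton_prime hp.ne_zero).mpr hp.prime
  let χ : P2 K →+* FractionRing (P2 K ⧸ Ideal.span {p}) :=
    (algebraMap (P2 K ⧸ Ideal.span {p}) _).comp (Ideal.Quotient.mk _)
  have hχ : ∀ q, χ q = 0 ↔ p ∣ q := fun q => by
    rw [RingHom.comp_apply, IsFractionRing.to_map_eq_zero_iff, Ideal.Quotient.eq_zero_iff_dvd]
  have hx := injective_comp_polynomialAeval_X hχ hpx
  have hy := injective_comp_polynomialAeval_X hχ hpy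
  set φ := RatFunc.liftRingHom _ (nonZeroDivisors_le_comap_nonZeroDivisors_of_injective _ hx)
  set ψ := RatFunc.liftRingHom _ (nonZeroDivisors_le_comap_nonZeroDivisors_of_injective _ hy)
  refine ⟨RingHom.eqLocus (φ.comp (RingHom.fst _ _)) (ψ.comp (RingHom.snd _ _)), ?_, ?_⟩
  · ext ⟨f, g⟩
    exact liftRingHom_eq_liftRingHom_iff_dvd_NS hχ hx hy f g
  · rintro ⟨f, g⟩ (h : φ f = ψ g) -
    show φ f⁻¹ = ψ g⁻¹
    rw [map_inv₀, map_inv₀, h]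

/-- `F(p) = {(f,g) : p ∣ numerator of f − g}` is a subfield of `K(x) × K(y)`:
a subring containing `1` that is closed under inverses of nonzero elements. -/
theorem statement1 [IsAlgClosed K] [CharZero K]
    (p : P2 K) (hp : Irreducible p)
    (hpx : ¬ ∃ u : Polynomial K, p = toX u)
    (hpy : ¬ ∃ u : Polynomial K, p = toY u) :
    ∃ S : Subring (RatFunc K × RatFunc K),
      (S : Set (RatFunc K × RatFunc K)) = {fg | p ∣ NS fg.1 fg.2} ∧
      ∀ z ∈ S, z ≠ 0 → z⁻¹ ∈ S :=
  statement1_general p hp hpx hpy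
end
end

section
/- Let K be a field of characteristic 0, and let f, F ∈ K(x) and g, G ∈ K(y) be non-constant rational functions. Then f_n·g_d − g_n·f_d divides F_n·G_d − G_n·F_d in K[x,y] if and only if there exists h ∈ K(t) with h∘f = F and h∘g = G. -/
/-!
Write `P_c(X) = F_n(X) - c·F_d(X)` and `Q_c(X) = f_n(X) - c·f_d(X)`. Over `K(y)`, `NS f g` is
`g_d(y)·Q_g(x)`, and as a polynomial in `x` over `K[y]` it is primitive because `f` is not
constant; by Gauss's lemma the divisibility in `K[x,y]` is therefore `Q_g ∣ P_G` in `K(y)[x]`.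

Both sides come from the generic polynomials `Q_t, P_c ∈ K(t)[x]` under `t ↦ g`. Via
`K(t) ≅ K(f)`, `Q_t` is the minimal polynomial of `x` over `K(f)`, hence irreducible, and `x` is
a root of its image under `t ↦ f`; so `Q_t ∣ P_h` iff `h(f) = F`. Mapping such a divisibility
along `t ↦ g` gives one direction. For the other, reduce `F_n` and `F_d` modulo `Q_t`: the
remainders `r₀, r₁` satisfy `r₀(g) = G·r₁(g)`, so `h = r₀,ⱼ / r₁,ⱼ` for any nonzero coefficient
`r₁,ⱼ` has `h(g) = G` and `r₀ = h·r₁`, i.e. `Q_t ∣ P_h`.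
-/

open MvPolynomial

noncomputable section

variable {K : Type*} [Field K]

/-- Composition `h ∘ f` of rational functions. -/
def comp (h f : RatFunc K) : RatFunc K := RatFunc.eval RatFunc.C f h

open Polynomial hiding comp
open IntermediateField

section Subst

variable {L : Type*} [Field L] [Algebra K L]

def RatFunc.subst (f : L) (hf : Transcendental K f) : RatFunc K →ₐ[K] L :=
  (K⟮f⟯).val.comp (RatFunc.algEquivOfTranscendental f hf).toAlgHom

theorem RatFunc.subst_apply {f : L} (hf : Transcendental K f) (u : RatFunc K) :
    subst f hf u = aeval f u.num / aeval f u.denom := by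
  simp [subst, algEquivOfTranscendental_apply]

theorem RatFunc.subst_X {f : L} (hf : Transcendental K f) : subst f hf X = f := by
  simp [subst]

end Subst

theorem comp_eq_subst {f : RatFunc K} (hf : Transcendental K f) (h : RatFunc K) :
    comp h f = RatFunc.subst f hf h := by
  rw [comp, RatFunc.eval, RatFunc.subst_apply, Polynomial.aeval_def, Polynomial.aeval_def,
    RatFunc.algebraMap_eq_C]

section LevelPoly

variable {E : Type*} [CommRing E] [Algebra K E]

def RatFunc.levelPoly (r : RatFunc K) (c : E) : E[X] :=
  r.num.map (algebraMap K E) - Polynomial.C c * r.denom.map (algebraMap K E)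

theorem RatFunc.map_levelPoly {E' : Type*} [CommRing E'] [Algebra K E'] (φ : E →ₐ[K] E')
    (r : RatFunc K) (c : E) : (levelPoly r c).map φ = levelPoly r (φ c) := by
  simp [levelPoly, Polynomial.map_map]

theorem RatFunc.eval_levelPoly (r : RatFunc K) (c z : E) :
    (levelPoly r c).eval z = aeval z r.num - c * aeval z r.denom := by
  simp [levelPoly, eval_map_algebraMap]

theorem RatFunc.eval_X_levelPoly_eq_zero_iff (r c : RatFunc K) :
    (levelPoly r c).eval RatFunc.X = 0 ↔ c = r := by
  rw [eval_levelPoly, aeval_X_left_eq_algebraMap, aeval_X_left_eq_algebraMap, sub_eq_zero,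
    ← div_eq_iff (algebraMap_ne_zero r.denom_ne_zero), num_div_denom, eq_comm]

theorem RatFunc.levelPoly_modByMonic {Q : E[X]} (r : RatFunc K) (c : E) :
    levelPoly r c %ₘ Q =
      r.num.map (algebraMap K E) %ₘ Q - Polynomial.C c * (r.denom.map (algebraMap K E) %ₘ Q) := by
  rw [levelPoly, sub_modByMonic, ← Polynomial.smul_eq_C_mul, smul_modByMonic,
    Polynomial.smul_eq_C_mul]

open algebraAdjoinAdjoin in
theorem RatFunc.irreducible_levelPoly_X {f : RatFunc K} (hf : ¬ ∃ c, f = RatFunc.C c) :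
    Irreducible (levelPoly f (RatFunc.X : RatFunc K)) := by
  have key : (f.minpolyX K⟮f⟯).map
      (algEquivOfTranscendental f (transcendental_of_ne_C f hf)).symm.toAlgHom =
      levelPoly f (RatFunc.X : RatFunc K) := by
    rw [minpolyX, ← levelPoly, map_levelPoly]
    congr 1
    simp
  rw [← key]
  exact (MulEquiv.irreducible_iff (Polynomial.mapAlgEquiv _)).mpr (irreducible_minpolyX f hf)

end LevelPoly

theorem Irreducible.dvd_of_eval_map_eq_zero {k E : Type*} [Field k] [CommRing E] [Nontrivial E]
    (φ : k →+* E) {p q : k[X]} (hp : Irreducible p) {z : E}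
    (hpz : (p.map φ).eval z = 0) (hqz : (q.map φ).eval z = 0) : p ∣ q := by
  let := φ.toAlgebra
  rw [Polynomial.eval_map] at hpz hqz
  exact (hp.dvd_iff_aeval_eq_zero (b := z) hpz).mp hqz

section

variable {f : RatFunc K}

theorem RatFunc.eval_X_map_subst_eq_zero_of_levelPoly_X_dvd (hf : Transcendental K f)
    {q : (RatFunc K)[X]} (hq : levelPoly f RatFunc.X ∣ q) :
    (q.map (subst f hf : RatFunc K →+* RatFunc K)).eval RatFunc.X = 0 := by
  have hmap := Polynomial.map_dvd (subst f hf : RatFunc K →+* RatFunc K) hq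
  rw [map_levelPoly, subst_X] at hmap
  exact eval_eq_zero_of_dvd_of_eval_eq_zero hmap ((eval_X_levelPoly_eq_zero_iff f f).mpr rfl)

theorem RatFunc.not_levelPoly_X_dvd_map (hf : Transcendental K f) {p : K[X]} (hp : p ≠ 0) :
    ¬ levelPoly f RatFunc.X ∣ p.map (algebraMap K (RatFunc K)) := by
  intro hdvd
  have h0 := eval_X_map_subst_eq_zero_of_levelPoly_X_dvd hf hdvd
  rw [Polynomial.map_map, AlgHom.comp_algebraMap, eval_map_algebraMap,
    aeval_X_left_eq_algebraMap] at h0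
  exact algebraMap_ne_zero hp h0

theorem RatFunc.levelPoly_X_dvd_levelPoly_iff (hf : ¬ ∃ c, f = RatFunc.C c) (F h : RatFunc K) :
    levelPoly f RatFunc.X ∣ levelPoly F h ↔ subst f (transcendental_of_ne_C f hf) h = F := by
  set ψ := subst f (transcendental_of_ne_C f hf)
  have hroot (c : RatFunc K) :
      ((levelPoly F c).map (ψ : RatFunc K →+* RatFunc K)).eval RatFunc.X = 0 ↔ ψ c = F := by
    rw [map_levelPoly, eval_X_levelPoly_eq_zero_iff]
  refine ⟨fun hdvd => (hroot h).mp (eval_X_map_subst_eq_zero_of_levelPoly_X_dvd _ hdvd),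
    fun hψ => (irreducible_levelPoly_X hf).dvd_of_eval_map_eq_zero (ψ : RatFunc K →+* RatFunc K)
      (z := RatFunc.X) ?_ ((hroot h).mpr hψ)⟩
  rw [map_levelPoly, subst_X, eval_X_levelPoly_eq_zero_iff]

theorem RatFunc.exists_levelPoly_X_dvd_of_levelPoly_dvd (hf : ¬ ∃ c, f = RatFunc.C c)
    {g : RatFunc K} (hg : Transcendental K g) {F G : RatFunc K}
    (hdvd : levelPoly f g ∣ levelPoly F G) :
    ∃ h, subst g hg h = G ∧ levelPoly f RatFunc.X ∣ levelPoly F h := by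
  set ψ := subst g hg
  set P := levelPoly f (RatFunc.X : RatFunc K)
  have hP : P ≠ 0 := (irreducible_levelPoly_X hf).ne_zero
  set Q := P * Polynomial.C P.leadingCoeff⁻¹
  have hQ : Q.Monic := monic_mul_leadingCoeff_inv hP
  have hPQ : Associated P Q :=
    associated_mul_unit_right P _
      (Polynomial.isUnit_C.mpr (inv_ne_zero (leadingCoeff_ne_zero.mpr hP)).isUnit)
  have hfix : ∀ p : K[X], (p.map (algebraMap K (RatFunc K))).map (ψ : RatFunc K →+* RatFunc K) =
      p.map (algebraMap K (RatFunc K)) :=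
    fun p => by rw [Polynomial.map_map, AlgHom.comp_algebraMap]
  set r₀ := F.num.map (algebraMap K (RatFunc K)) %ₘ Q
  set r₁ := F.denom.map (algebraMap K (RatFunc K)) %ₘ Q
  have hrem : r₀.map ψ = Polynomial.C G * r₁.map ψ := by
    have hQψ : Q.map ψ ∣ levelPoly F G := by
      refine (hPQ.map (Polynomial.mapRingHom (ψ : RatFunc K →+* RatFunc K))).dvd_iff_dvd_left.mp ?_
      simpa [P, ψ, map_levelPoly, subst_X] using hdvd
    have := (modByMonic_eq_zero_iff_dvd (hQ.map _)).mpr hQψ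
    rwa [levelPoly_modByMonic, ← hfix, ← hfix F.denom, ← map_modByMonic _ hQ,
      ← map_modByMonic _ hQ, sub_eq_zero] at this
  have hr₁ : r₁ ≠ 0 := fun h0 => not_levelPoly_X_dvd_map (transcendental_of_ne_C f hf)
    F.denom_ne_zero (hPQ.dvd_iff_dvd_left.mpr ((modByMonic_eq_zero_iff_dvd hQ).mp h0))
  set j := r₁.natDegree
  have hj : r₁.coeff j ≠ 0 := leadingCoeff_ne_zero.mpr hr₁
  have hψ : ψ (r₀.coeff j / r₁.coeff j) = G := by
    have := congrArg (Polynomial.coeff · j) hrem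
    simp only [Polynomial.coeff_map, Polynomial.coeff_C_mul, AlgHom.coe_toRingHom] at this
    rw [map_div₀, this, mul_div_cancel_right₀ _ ((map_ne_zero ψ).mpr hj)]
  refine ⟨_, hψ, hPQ.dvd_iff_dvd_left.mpr ((modByMonic_eq_zero_iff_dvd hQ).mp ?_)⟩
  have hr : r₀ = Polynomial.C (r₀.coeff j / r₁.coeff j) * r₁ := by
    apply Polynomial.map_injective (ψ : RatFunc K →+* RatFunc K) ψ.injective
    rw [Polynomial.map_mul, Polynomial.map_C, AlgHom.coe_toRingHom, hψ, hrem]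
  rw [levelPoly_modByMonic, ← hr, sub_self]

theorem RatFunc.levelPoly_dvd_levelPoly_iff (hf : ¬ ∃ c, f = RatFunc.C c) {g : RatFunc K}
    (hg : Transcendental K g) (F G : RatFunc K) :
    levelPoly f g ∣ levelPoly F G ↔
      ∃ h, subst f (transcendental_of_ne_C f hf) h = F ∧ subst g hg h = G := by
  constructor
  · intro hdvd
    obtain ⟨h, hG, hF⟩ := exists_levelPoly_X_dvd_of_levelPoly_dvd hf hg hdvd
    exact ⟨h, (levelPoly_X_dvd_levelPoly_iff hf F h).mp hF, hG⟩
  · rintro ⟨h, hF, rfl⟩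
    have := Polynomial.map_dvd (subst g hg : RatFunc K →+* RatFunc K)
      ((levelPoly_X_dvd_levelPoly_iff hf F h).mpr hF)
    rwa [map_levelPoly, map_levelPoly, subst_X] at this

end

/-- `K[x,y] ≃ K[y][x]`: the outer variable is `x`, the coefficients are polynomials in `y`. -/
def outerXEquiv : P2 K ≃ₐ[K] K[X][X] :=
  (finSuccEquiv K 1).trans (Polynomial.mapAlgEquiv (uniqueAlgEquiv K (Fin 1)))

theorem outerXEquiv_toX (u : K[X]) : outerXEquiv (toX u) = u.map (algebraMap K K[X]) := by
  rw [toX, ← Polynomial.aeval_algHom_apply, outerXEquiv, AlgEquiv.trans_apply,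
    finSuccEquiv_X_zero, Polynomial.coe_mapAlgEquiv, Polynomial.map_X,
    ← Polynomial.aeval_map_algebraMap K[X], Polynomial.aeval_X_left_apply]

theorem outerXEquiv_toY (u : K[X]) : outerXEquiv (toY u) = Polynomial.C u := by
  rw [toY, ← Polynomial.aeval_algHom_apply, outerXEquiv, AlgEquiv.trans_apply,
    show (1 : Fin 2) = Fin.succ 0 from rfl, finSuccEquiv_X_succ, Polynomial.coe_mapAlgEquiv,
    Polynomial.map_C]
  simp only [RingHom.coe_coe, uniqueAlgEquiv_apply, MvPolynomial.eval₂_X]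
  rw [← Polynomial.algebraMap_eq, Polynomial.aeval_algebraMap_apply,
    Polynomial.aeval_X_left_apply, Polynomial.algebraMap_eq]

theorem outerXEquiv_NS (f g : RatFunc K) :
    outerXEquiv (NS f g) = f.num.map (algebraMap K K[X]) * Polynomial.C g.denom -
      Polynomial.C g.num * f.denom.map (algebraMap K K[X]) := by
  rw [NS, map_sub, map_mul, map_mul, outerXEquiv_toX, outerXEquiv_toX, outerXEquiv_toY,
    outerXEquiv_toY]

theorem map_outerXEquiv_NS (f g : RatFunc K) :
    (outerXEquiv (NS f g)).map (algebraMap K[X] (RatFunc K)) =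
      Polynomial.C (algebraMap K[X] (RatFunc K) g.denom) * RatFunc.levelPoly f g := by
  have hg : g * algebraMap K[X] (RatFunc K) g.denom = algebraMap K[X] (RatFunc K) g.num :=
    ((div_eq_iff (RatFunc.algebraMap_ne_zero g.denom_ne_zero)).mp g.num_div_denom).symm
  rw [outerXEquiv_NS, RatFunc.levelPoly, Polynomial.map_sub, Polynomial.map_mul,
    Polynomial.map_mul, Polynomial.map_map, Polynomial.map_map, Polynomial.map_C, Polynomial.map_C,
    ← IsScalarTower.algebraMap_eq, ← hg, Polynomial.C_mul]
  ring

theorem RatFunc.exists_num_denom_minor_ne_zero {f : RatFunc K} (hf : ¬ ∃ c, f = RatFunc.C c) :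
    ∃ i j, f.num.coeff i * f.denom.coeff j - f.num.coeff j * f.denom.coeff i ≠ 0 := by
  by_contra! hminor
  set j := f.denom.natDegree
  have hj : f.denom.coeff j ≠ 0 := Polynomial.leadingCoeff_ne_zero.mpr f.denom_ne_zero
  set a := f.num.coeff j / f.denom.coeff j
  have hnum : f.num = Polynomial.C a * f.denom := by
    ext i
    rw [Polynomial.coeff_C_mul, div_mul_eq_mul_div, eq_div_iff hj]
    linear_combination hminor i j
  refine hf ⟨a, ?_⟩
  calc f = algebraMap K[X] (RatFunc K) f.num / algebraMap K[X] (RatFunc K) f.denom :=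
        (num_div_denom f).symm
    _ = _ := by
      rw [hnum, map_mul, algebraMap_C,
        mul_div_cancel_right₀ _ (algebraMap_ne_zero f.denom_ne_zero)]

theorem isPrimitive_outerXEquiv_NS {f : RatFunc K} (hf : ¬ ∃ c, f = RatFunc.C c)
    (g : RatFunc K) : (outerXEquiv (NS f g)).IsPrimitive := by
  obtain ⟨i, j, hm⟩ := RatFunc.exists_num_denom_minor_ne_zero hf
  rw [Polynomial.isPrimitive_iff_isUnit_of_C_dvd]
  intro c hc
  simp only [Polynomial.C_dvd_iff_dvd_coeff, outerXEquiv_NS, Polynomial.coeff_sub,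
    Polynomial.coeff_mul_C, Polynomial.coeff_C_mul, Polynomial.coeff_map,
    Polynomial.algebraMap_eq] at hc
  have hunit := (Polynomial.isUnit_C (x := _)).mpr hm.isUnit
  have hd : c ∣ g.denom := by
    rw [← hunit.dvd_mul_left]
    convert dvd_sub ((hc i).mul_left (Polynomial.C (f.denom.coeff j)))
      ((hc j).mul_left (Polynomial.C (f.denom.coeff i))) using 1
    simp only [map_sub, map_mul]
    ring
  have hn : c ∣ g.num := by
    rw [← hunit.dvd_mul_left]
    convert dvd_sub ((hc i).mul_left (Polynomial.C (f.num.coeff j)))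
      ((hc j).mul_left (Polynomial.C (f.num.coeff i))) using 1
    simp only [map_sub, map_mul]
    ring
  exact g.isCoprime_num_denom.isUnit_of_dvd' hn hd

theorem NS_dvd_NS_iff {f : RatFunc K} (hf : ¬ ∃ c, f = RatFunc.C c) (g F G : RatFunc K) :
    NS f g ∣ NS F G ↔ RatFunc.levelPoly f g ∣ RatFunc.levelPoly F G := by
  have hunit (r : RatFunc K) : IsUnit (Polynomial.C (algebraMap K[X] (RatFunc K) r.denom)) :=
    Polynomial.isUnit_C.mpr (RatFunc.algebraMap_ne_zero r.denom_ne_zero).isUnit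
  rw [← map_dvd_iff outerXEquiv, ← (hunit g).mul_left_dvd, ← (hunit G).dvd_mul_left,
    ← map_outerXEquiv_NS, ← map_outerXEquiv_NS]
  exact ⟨Polynomial.map_dvd _,
    (isPrimitive_outerXEquiv_NS hf g).dvd_of_fraction_map_dvd_fraction_map⟩

theorem RatFunc.eval₂_C_ne_zero {f : RatFunc K} (hf : Transcendental K f) {p : K[X]}
    (hp : p ≠ 0) : Polynomial.eval₂ RatFunc.C f p ≠ 0 := by
  rw [← RatFunc.algebraMap_eq_C, ← Polynomial.aeval_def]
  exact fun h => hp (transcendental_iff.mp hf p h)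

theorem statement3_general
    (f F g G : RatFunc K)
    (hf : ¬ ∃ c : K, f = RatFunc.C c)
    (hg : ¬ ∃ c : K, g = RatFunc.C c) :
    NS f g ∣ NS F G ↔
      ∃ h : RatFunc K,
        Polynomial.eval₂ RatFunc.C f h.denom ≠ 0 ∧
        Polynomial.eval₂ RatFunc.C g h.denom ≠ 0 ∧
        comp h f = F ∧ comp h g = G := by
  have tf := RatFunc.transcendental_of_ne_C f hf
  have tg := RatFunc.transcendental_of_ne_C g hg
  rw [NS_dvd_NS_iff hf, RatFunc.levelPoly_dvd_levelPoly_iff hf tg]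
  simp only [comp_eq_subst tf, comp_eq_subst tg, ne_eq,
    RatFunc.eval₂_C_ne_zero tf (RatFunc.denom_ne_zero _),
    RatFunc.eval₂_C_ne_zero tg (RatFunc.denom_ne_zero _), not_false_eq_true, true_and]

/-- `f_n g_d − g_n f_d` divides `F_n G_d − G_n F_d` in `K[x,y]` iff `(F,G) = h((f,g))`
for some rational function `h ∈ K(t)`. -/
theorem statement3 [CharZero K]
    (f F g G : RatFunc K)
    (hf : ¬ ∃ c : K, f = RatFunc.C c) (hF : ¬ ∃ c : K, F = RatFunc.C c)
    (hg : ¬ ∃ c : K, g = RatFunc.C c) (hG : ¬ ∃ c : K, G = RatFunc.C c) :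
    NS f g ∣ NS F G ↔
      ∃ h : RatFunc K,
        Polynomial.eval₂ RatFunc.C f h.denom ≠ 0 ∧
        Polynomial.eval₂ RatFunc.C g h.denom ≠ 0 ∧
        comp h f = F ∧ comp h g = G :=
  statement3_general f F g G hf hg
end
end

section
/- Let K be an algebraically closed field of characteristic 0 and let p ∈ K[x,y] be near-separated. If ω₁ and ω₂ are outward-pointing normal vectors of two distinct edges of the Newton polygon of p, then sign(ω₁) ≠ sign(ω₂), where sign(ω) = (sgn(ω_x), sgn(ω_y)). -/
open MvPolynomial

noncomputable section

variable {K : Type*} [Field K]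

def IsNearSeparated (s : P2 K) : Prop := ∃ f g : RatFunc K, s = NS f g

/-- The `ω`-weight of a monomial exponent vector. -/
def wdeg (ω : ℤ × ℤ) (d : Fin 2 →₀ ℕ) : ℤ := ω.1 * (d 0 : ℤ) + ω.2 * (d 1 : ℤ)

/-- The face of the Newton polygon of `p` in direction `ω`: the set of exponent
vectors of `p` of maximal `ω`-weight. It is an edge iff it has at least two points,
in which case `ω` is an outward-pointing normal of that edge. -/
def face (ω : ℤ × ℤ) (p : P2 K) : Finset (Fin 2 →₀ ℕ) :=
  p.support.filter (fun d => ∀ e ∈ p.support, wdeg ω e ≤ wdeg ω d)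

/-!
For a weight `ω` in an open quadrant, the `ω`-face of a product `u(x) v(y)` is a single
corner, whose coordinates are the top or bottom degrees of `u` and `v` according to the signs
of `ω`. A near-separated polynomial is a difference of two such products, so an edge in such a
direction must join the two corners, which depend only on the signs of `ω`. The corners could
coincide and cancel, but replacing `(f_n, g_n)` by `(f_n - r f_d, g_n - r g_d)` does not change
the polynomial and, for the right `r`, pulls them apart. For a weight on an axis the face
depends only on the signs of `ω` in any case.
-/

lemma Int.mul_le_mul_iff_of_sign_eq {a b : ℤ} (h : a.sign = b.sign) (x y : ℤ) :
    a * x ≤ a * y ↔ b * x ≤ b * y := by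
  have key : ∀ c : ℤ, c * x ≤ c * y ↔ 0 ≤ c.sign * (y - x).sign := fun c => by
    rw [← Int.sign_mul, Int.sign_nonneg_iff, mul_sub, sub_nonneg]
  rw [key, key, h]

lemma Int.eq_zero_iff_of_sign_eq {a b : ℤ} (h : a.sign = b.sign) : a = 0 ↔ b = 0 := by
  rw [← Int.sign_eq_zero_iff_zero, h, Int.sign_eq_zero_iff_zero]

namespace Polynomial

def extDeg (w : ℤ) (u : Polynomial K) : ℕ :=
  if 0 < w then u.natDegree else u.natTrailingDegree

lemma extDeg_congr {w w' : ℤ} (h : w.sign = w'.sign) (u : Polynomial K) :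
    u.extDeg w = u.extDeg w' := by
  simp only [extDeg, ← Int.sign_eq_one_iff_pos, h]

lemma coeff_extDeg_ne_zero {u : Polynomial K} (hu : u ≠ 0) (w : ℤ) :
    u.coeff (u.extDeg w) ≠ 0 := by
  unfold extDeg
  split_ifs
  · exact mem_support_iff.1 (natDegree_mem_support_of_nonzero hu)
  · exact mem_support_iff.1 (natTrailingDegree_mem_support_of_nonzero hu)

lemma mul_le_mul_extDeg (w : ℤ) {u : Polynomial K} {i : ℕ} (hi : u.coeff i ≠ 0) :
    w * i ≤ w * u.extDeg w := by
  unfold extDeg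
  split_ifs with hw
  · exact mul_le_mul_of_nonneg_left (by exact_mod_cast le_natDegree_of_ne_zero hi) hw.le
  · exact mul_le_mul_of_nonpos_left (by exact_mod_cast natTrailingDegree_le_of_ne_zero hi)
      (not_lt.1 hw)

lemma mul_lt_mul_extDeg {w : ℤ} (hw : w ≠ 0) {u : Polynomial K} {i : ℕ} (hi : u.coeff i ≠ 0)
    (hne : i ≠ u.extDeg w) : w * i < w * u.extDeg w :=
  lt_of_le_of_ne (mul_le_mul_extDeg w hi) fun h => hne (by exact_mod_cast mul_left_cancel₀ hw h)

end Polynomial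

def corner (ω : ℤ × ℤ) (u v : Polynomial K) : Fin 2 →₀ ℕ :=
  Finsupp.single 0 (u.extDeg ω.1) + Finsupp.single 1 (v.extDeg ω.2)

@[simp]
lemma corner_apply_zero (ω : ℤ × ℤ) (u v : Polynomial K) : corner ω u v 0 = u.extDeg ω.1 := by
  simp [corner]

@[simp]
lemma corner_apply_one (ω : ℤ × ℤ) (u v : Polynomial K) : corner ω u v 1 = v.extDeg ω.2 := by
  simp [corner]

lemma eq_corner_iff {ω : ℤ × ℤ} {u v : Polynomial K} {d : Fin 2 →₀ ℕ} :
    d = corner ω u v ↔ d 0 = u.extDeg ω.1 ∧ d 1 = v.extDeg ω.2 := by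
  simp [Finsupp.ext_iff, Fin.forall_fin_two]

lemma corner_congr {ω ω' : ℤ × ℤ} (h₁ : ω.1.sign = ω'.1.sign) (h₂ : ω.2.sign = ω'.2.sign)
    (u v : Polynomial K) : corner ω u v = corner ω' u v := by
  simp only [corner, Polynomial.extDeg_congr h₁, Polynomial.extDeg_congr h₂]

lemma wdeg_corner (ω : ℤ × ℤ) (u v : Polynomial K) :
    wdeg ω (corner ω u v) = ω.1 * u.extDeg ω.1 + ω.2 * v.extDeg ω.2 := by
  simp [wdeg]

lemma coeff_toX_mul_toY (u v : Polynomial K) (d : Fin 2 →₀ ℕ) :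
    coeff d (toX u * toY v) = u.coeff (d 0) * v.coeff (d 1) := by
  induction u using Polynomial.induction_on' with
  | add p q hp hq =>
    simp only [toX, map_add, add_mul, coeff_add, Polynomial.coeff_add] at hp hq ⊢
    rw [hp, hq]
  | monomial n a =>
    induction v using Polynomial.induction_on' with
    | add p q hp hq =>
      simp only [toY, map_add, mul_add, coeff_add, Polynomial.coeff_add] at hp hq ⊢
      rw [hp, hq]
    | monomial m b =>
      simp only [toX, toY, Polynomial.aeval_monomial, algebraMap_eq, X_pow_eq_monomial,
        C_mul_monomial, mul_one, monomial_mul, coeff_monomial, Polynomial.coeff_monomial, mul_ite,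
        ite_mul, zero_mul, mul_zero]
      split_ifs <;> simp_all [Finsupp.ext_iff, Fin.forall_fin_two, eq_comm]

lemma face_congr {ω₁ ω₂ : ℤ × ℤ}
    (h : ∀ e d : Fin 2 →₀ ℕ, wdeg ω₁ e ≤ wdeg ω₁ d ↔ wdeg ω₂ e ≤ wdeg ω₂ d) (p : P2 K) :
    face ω₁ p = face ω₂ p :=
  Finset.filter_congr fun d _ => forall₂_congr fun e _ => h e d

lemma face_eq_of_sign_eq_of_axis {ω₁ ω₂ : ℤ × ℤ} (hs₁ : ω₁.1.sign = ω₂.1.sign)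
    (hs₂ : ω₁.2.sign = ω₂.2.sign) (haxis : ω₁.1 = 0 ∨ ω₁.2 = 0) (p : P2 K) :
    face ω₁ p = face ω₂ p := by
  apply face_congr
  intro e d
  rcases haxis with h | h
  · simpa [wdeg, h, (Int.eq_zero_iff_of_sign_eq hs₁).1 h] using
      Int.mul_le_mul_iff_of_sign_eq hs₂ _ _
  · simpa [wdeg, h, (Int.eq_zero_iff_of_sign_eq hs₂).1 h] using
      Int.mul_le_mul_iff_of_sign_eq hs₁ _ _

lemma face_zero (ω : ℤ × ℤ) : face ω (0 : P2 K) = ∅ := by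
  simp [face]

lemma face_neg (ω : ℤ × ℤ) (p : P2 K) : face ω (-p) = face ω p := by
  simp only [face, support_neg]

def IsExposedVertex (ω : ℤ × ℤ) (P : P2 K) (a : Fin 2 →₀ ℕ) : Prop :=
  a ∈ P.support ∧ ∀ d ∈ P.support, d ≠ a → wdeg ω d < wdeg ω a

namespace IsExposedVertex

variable {ω : ℤ × ℤ} {P Q : P2 K} {a b : Fin 2 →₀ ℕ}

lemma wdeg_le (h : IsExposedVertex ω P a) {d : Fin 2 →₀ ℕ} (hd : d ∈ P.support) :
    wdeg ω d ≤ wdeg ω a := by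
  by_cases hda : d = a
  · rw [hda]
  · exact (h.2 d hd hda).le

lemma face_eq (h : IsExposedVertex ω P a) : face ω P = {a} := by
  ext d
  simp only [face, Finset.mem_filter, Finset.mem_singleton]
  constructor
  · rintro ⟨hd, hmax⟩
    by_contra hda
    exact (h.2 d hd hda).not_ge (hmax a h.1)
  · rintro rfl
    exact ⟨h.1, fun e he => h.wdeg_le he⟩

lemma face_sub_subset (hP : IsExposedVertex ω P a) (hQ : IsExposedVertex ω Q b) (hab : a ≠ b) :
    face ω (P - Q) ⊆ {a, b} := by
  wlog hba : wdeg ω b ≤ wdeg ω a generalizing P Q a b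
  · rw [← neg_sub, face_neg, Finset.pair_comm]
    exact this hQ hP hab.symm (not_le.1 hba).le
  have haQ : a ∉ Q.support := fun ha => (hQ.2 a ha hab).not_ge hba
  have ha : a ∈ (P - Q).support := by
    rw [mem_support_iff, coeff_sub, notMem_support_iff.1 haQ, sub_zero]
    exact mem_support_iff.1 hP.1
  intro d hd
  simp only [face, Finset.mem_filter] at hd
  have hge : wdeg ω a ≤ wdeg ω d := hd.2 a ha
  rw [Finset.mem_insert, Finset.mem_singleton]
  rcases Finset.mem_union.1 (support_sub _ P Q hd.1) with hdP | hdQ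
  · exact .inl (by_contra fun hda => (hP.2 d hdP hda).not_ge hge)
  · exact .inr (by_contra fun hdb => (hQ.2 d hdQ hdb).not_ge (hba.trans hge))

end IsExposedVertex

lemma isExposedVertex_toX_mul_toY {ω : ℤ × ℤ} (hω₁ : ω.1 ≠ 0) (hω₂ : ω.2 ≠ 0)
    {u v : Polynomial K} (hu : u ≠ 0) (hv : v ≠ 0) :
    IsExposedVertex ω (toX u * toY v) (corner ω u v) := by
  have hcoeff : ∀ d, d ∈ (toX u * toY v).support ↔ u.coeff (d 0) ≠ 0 ∧ v.coeff (d 1) ≠ 0 :=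
    fun d => by rw [mem_support_iff, coeff_toX_mul_toY, mul_ne_zero_iff]
  refine ⟨?_, fun d hd hne => ?_⟩
  · rw [hcoeff]
    simpa [corner] using
      And.intro (u.coeff_extDeg_ne_zero hu ω.1) (v.coeff_extDeg_ne_zero hv ω.2)
  obtain ⟨hd₀, hd₁⟩ := (hcoeff d).1 hd
  have le₀ := Polynomial.mul_le_mul_extDeg ω.1 hd₀
  have le₁ := Polynomial.mul_le_mul_extDeg ω.2 hd₁
  rw [wdeg_corner, wdeg]
  rcases not_and_or.1 (eq_corner_iff.not.1 hne) with h | h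
  · linarith [Polynomial.mul_lt_mul_extDeg hω₁ hd₀ h]
  · linarith [Polynomial.mul_lt_mul_extDeg hω₂ hd₁ h]

lemma card_face_toX_mul_toY_le_one {ω : ℤ × ℤ} (hω₁ : ω.1 ≠ 0) (hω₂ : ω.2 ≠ 0)
    (u v : Polynomial K) :
    (face ω (toX u * toY v)).card ≤ 1 := by
  by_cases huv : u = 0 ∨ v = 0
  · rcases huv with rfl | rfl <;> simp [toX, toY, face_zero]
  · rw [not_or] at huv
    rw [(isExposedVertex_toX_mul_toY hω₁ hω₂ huv.1 huv.2).face_eq, Finset.card_singleton]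

lemma ne_zero_of_two_le_card_face {ω : ℤ × ℤ} (hω₁ : ω.1 ≠ 0) (hω₂ : ω.2 ≠ 0)
    {a b c d : Polynomial K}
    (h : 2 ≤ (face ω (toX a * toY b - toY c * toX d)).card) :
    a ≠ 0 ∧ b ≠ 0 ∧ c ≠ 0 ∧ d ≠ 0 := by
  have hab : toX a * toY b ≠ 0 := fun h0 => by
    rw [h0, zero_sub, face_neg, mul_comm] at h
    linarith [card_face_toX_mul_toY_le_one hω₁ hω₂ d c]
  have hcd : toY c * toX d ≠ 0 := fun h0 => by
    rw [h0, sub_zero] at h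
    linarith [card_face_toX_mul_toY_le_one hω₁ hω₂ a b]
  refine ⟨?_, ?_, ?_, ?_⟩ <;> rintro rfl <;> simp [toX, toY] at hab hcd

lemma face_toX_mul_toY_sub_eq_pair {ω : ℤ × ℤ} (hω₁ : ω.1 ≠ 0) (hω₂ : ω.2 ≠ 0)
    {a b c d : Polynomial K}
    (h : 2 ≤ (face ω (toX a * toY b - toY c * toX d)).card)
    (hne : corner ω a b ≠ corner ω d c) :
    face ω (toX a * toY b - toY c * toX d) = {corner ω a b, corner ω d c} := by
  obtain ⟨ha, hb, hc, hd⟩ := ne_zero_of_two_le_card_face hω₁ hω₂ h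
  rw [mul_comm (toY c)] at h ⊢
  exact Finset.eq_of_subset_of_card_le
    ((isExposedVertex_toX_mul_toY hω₁ hω₂ ha hb).face_sub_subset
      (isExposedVertex_toX_mul_toY hω₁ hω₂ hd hc) hne)
    (Finset.card_le_two.trans h)

lemma toX_mul_toY_sub_eq (a b c d : Polynomial K) (r : K) :
    toX a * toY b - toY c * toX d =
      toX (a - Polynomial.C r * d) * toY b - toY (c - Polynomial.C r * b) * toX d := by
  simp only [toX, toY, map_sub, map_mul, Polynomial.aeval_C]
  ring

lemma face_toX_mul_toY_sub_eq_of_sign_eq {ω₁ ω₂ : ℤ × ℤ} (hω₁ : ω₁.1 ≠ 0) (hω₂ : ω₁.2 ≠ 0)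
    (hs₁ : ω₁.1.sign = ω₂.1.sign) (hs₂ : ω₁.2.sign = ω₂.2.sign) {a b c d : Polynomial K}
    (h₁ : 2 ≤ (face ω₁ (toX a * toY b - toY c * toX d)).card)
    (h₂ : 2 ≤ (face ω₂ (toX a * toY b - toY c * toX d)).card) :
    face ω₁ (toX a * toY b - toY c * toX d) = face ω₂ (toX a * toY b - toY c * toX d) := by
  have hω₁' : ω₂.1 ≠ 0 := (Int.eq_zero_iff_of_sign_eq hs₁).not.1 hω₁
  have hω₂' : ω₂.2 ≠ 0 := (Int.eq_zero_iff_of_sign_eq hs₂).not.1 hω₂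
  set n := d.extDeg ω₁.1
  set r := a.coeff n / d.coeff n
  rw [toX_mul_toY_sub_eq a b c d r] at h₁ h₂ ⊢
  obtain ⟨ha, -, -, hd⟩ := ne_zero_of_two_le_card_face hω₁ hω₂ h₁
  have hcoeff : (a - Polynomial.C r * d).coeff n = 0 := by
    rw [Polynomial.coeff_sub, Polynomial.coeff_C_mul,
      div_mul_cancel₀ _ (d.coeff_extDeg_ne_zero hd _), sub_self]
  have hne : corner ω₁ (a - Polynomial.C r * d) b ≠ corner ω₁ d (c - Polynomial.C r * b) := by
    intro h
    have h₀ : (a - Polynomial.C r * d).extDeg ω₁.1 = n := by simpa using congrArg (· 0) h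
    exact Polynomial.coeff_extDeg_ne_zero ha ω₁.1 (h₀ ▸ hcoeff)
  have hne' : corner ω₂ (a - Polynomial.C r * d) b ≠ corner ω₂ d (c - Polynomial.C r * b) := by
    rwa [← corner_congr hs₁ hs₂, ← corner_congr hs₁ hs₂]
  rw [face_toX_mul_toY_sub_eq_pair hω₁ hω₂ h₁ hne, face_toX_mul_toY_sub_eq_pair hω₁' hω₂' h₂ hne',
    corner_congr hs₁ hs₂, corner_congr hs₁ hs₂]

theorem statement8_general
    (p : P2 K) (hsep : IsNearSeparated p)
    (ω₁ ω₂ : ℤ × ℤ)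
    (h1 : 2 ≤ (face ω₁ p).card) (h2 : 2 ≤ (face ω₂ p).card)
    (hdist : face ω₁ p ≠ face ω₂ p) :
    (Int.sign ω₁.1, Int.sign ω₁.2) ≠ (Int.sign ω₂.1, Int.sign ω₂.2) := by
  intro hsign
  obtain ⟨hs₁, hs₂⟩ := Prod.mk.inj hsign
  apply hdist
  by_cases haxis : ω₁.1 = 0 ∨ ω₁.2 = 0
  · exact face_eq_of_sign_eq_of_axis hs₁ hs₂ haxis p
  · obtain ⟨hω₁, hω₂⟩ := not_or.1 haxis
    obtain ⟨f, g, rfl⟩ := hsep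
    exact face_toX_mul_toY_sub_eq_of_sign_eq hω₁ hω₂ hs₁ hs₂ h1 h2

/-- If `p` is near-separated and `ω₁, ω₂` are outward-pointing normals of two
distinct edges of the Newton polygon of `p`, then `sign ω₁ ≠ sign ω₂`. -/
theorem statement8 [IsAlgClosed K] [CharZero K]
    (p : P2 K) (hsep : IsNearSeparated p)
    (ω₁ ω₂ : ℤ × ℤ)
    (h1 : 2 ≤ (face ω₁ p).card) (h2 : 2 ≤ (face ω₂ p).card)
    (hdist : face ω₁ p ≠ face ω₂ p) :
    (Int.sign ω₁.1, Int.sign ω₁.2) ≠ (Int.sign ω₂.1, Int.sign ω₂.2) :=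
  statement8_general p hsep ω₁ ω₂ h1 h2 hdist
end
end
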